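/- For every integer k ≥ 4, there exists a coalition partition Ψ of the path P_k with four parts such that the coalition graph CG(P_k, Ψ) is isomorphic to the cycle C_4. -/

import Mathlib

open SimpleGraph

attribute [local instance] Classical.propDecidable

def Dominates {V : Type*} (G : SimpleGraph V) (S : Set V) : Prop :=
  ∀ v, v ∉ S → ∃ u ∈ S, G.Adj u v

def Coalition {V : Type*} (G : SimpleGraph V) (A B : Set V) : Prop :=
  Disjoint A B ∧ ¬ Dominates G A ∧ ¬ Dominates G B ∧ Dominates G (A ∪ B)

def IsCoalitionPartition {V : Type*} (G : SimpleGraph V) (P : Finset (Set V)) : Prop :=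
  (∀ A ∈ P, A.Nonempty) ∧
  (∀ A ∈ P, ∀ B ∈ P, A ≠ B → Disjoint A B) ∧
  (∀ v : V, ∃ A ∈ P, v ∈ A) ∧
  (∀ A ∈ P, (Dominates G A ∧ ∃ v, A = {v}) ∨
    (¬ Dominates G A ∧ ∃ B ∈ P, B ≠ A ∧ Coalition G A B))

noncomputable def coalitionNumber {V : Type*} (G : SimpleGraph V) : ℕ :=
  sSup {n | ∃ P : Finset (Set V), IsCoalitionPartition G P ∧ P.card = n}

def coalitionGraph {V : Type*} (G : SimpleGraph V) (P : Finset (Set V)) :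
    SimpleGraph {A : Set V // A ∈ P} where
  Adj A B := Coalition G A.1 B.1
  symm := by
    constructor
    rintro A B ⟨d, na, nb, u⟩
    exact ⟨d.symm, nb, na, by rwa [Set.union_comm]⟩
  loopless := by
    constructor
    rintro ⟨A, hA⟩ ⟨d, na, nb, u⟩
    rw [Set.union_self] at u
    exact na u

/-! Label vertex `n` of the path by `0` if `n = 0`, `2` if `n = 1`, `1` if `n ≥ 2` is even and `3`
if `n ≥ 3` is odd, and take the fibres of the labelling as the parts. A union of parts dominates
`P_k` exactly when it contains a part of even label and a part of odd label: every closed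
neighbourhood contains either both vertices `0, 1` or vertices of both labels `1, 3`, while
`N[0] = {0, 1}` has only even labels and `N[3] ⊆ {2, 3, 4}` only odd ones. Hence two parts form a
coalition iff their labels have different parity, which is adjacency in `C_4`. -/
section Fibers

variable {V ι : Type*} {G : SimpleGraph V}

theorem Coalition.ne {A B : Set V} (h : Coalition G A B) : A ≠ B := by
  rintro rfl
  exact h.2.1 (by simpa using h.2.2.2)

variable {f : V → ι}

theorem injective_preimage_singleton (hf : f.Surjective) :
    Function.Injective fun i => f ⁻¹' {i} :=
  (Set.preimage_injective.mpr hf).comp Set.singleton_injective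

theorem isCoalitionPartition_image_preimage_singleton [Fintype ι] (hf : f.Surjective)
    (hpartner : ∀ i, ∃ j, Coalition G (f ⁻¹' {i}) (f ⁻¹' {j})) :
    IsCoalitionPartition G (Finset.univ.image fun i => f ⁻¹' {i}) := by
  simp only [IsCoalitionPartition, Finset.mem_image, Finset.mem_univ, true_and,
    forall_exists_index, forall_apply_eq_imp_iff, exists_exists_eq_and]
  refine ⟨fun i => hf i, fun i j hij => ?_, fun v => ⟨f v, rfl⟩, fun i => Or.inr ?_⟩
  · exact Disjoint.preimage f (Set.disjoint_singleton.mpr fun h => hij (by rw [h]))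
  · obtain ⟨j, hij⟩ := hpartner i
    exact ⟨hij.2.1, j, hij.ne.symm, hij⟩

theorem card_image_preimage_singleton [Fintype ι] (hf : f.Surjective) :
    (Finset.univ.image fun i => f ⁻¹' {i}).card = Fintype.card ι :=
  Finset.card_image_of_injective _ (injective_preimage_singleton hf)

theorem nonempty_coalitionGraph_image_preimage_singleton_iso [Fintype ι] (hf : f.Surjective)
    {H : SimpleGraph ι} (hcoal : ∀ i j, Coalition G (f ⁻¹' {i}) (f ⁻¹' {j}) ↔ H.Adj i j) :
    Nonempty (coalitionGraph G (Finset.univ.image fun i => f ⁻¹' {i}) ≃g H) := by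
  let e : ι → {A // A ∈ Finset.univ.image fun i => f ⁻¹' {i}} :=
    fun i => ⟨f ⁻¹' {i}, Finset.mem_image_of_mem _ (Finset.mem_univ i)⟩
  have he : e.Bijective := by
    refine ⟨fun i j h => injective_preimage_singleton hf (congrArg Subtype.val h), ?_⟩
    rintro ⟨A, hA⟩
    obtain ⟨i, -, rfl⟩ := Finset.mem_image.mp hA
    exact ⟨i, rfl⟩
  exact ⟨(⟨Equiv.ofBijective e he, (hcoal _ _)⟩ : H ≃g _).symm⟩

end Fibers

section Path

def pathLabel (n : ℕ) : Fin 4 :=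
  if n = 0 then 0 else if n = 1 then 2 else if n % 2 = 0 then 1 else 3

theorem pathLabel_cases (n : ℕ) :
    n = 0 ∧ (pathLabel n).val = 0 ∨ n = 1 ∧ (pathLabel n).val = 2 ∨
      2 ≤ n ∧ n % 2 = 0 ∧ (pathLabel n).val = 1 ∨ 2 ≤ n ∧ n % 2 = 1 ∧ (pathLabel n).val = 3 := by
  unfold pathLabel
  split_ifs <;> simp <;> omega

variable {k : ℕ}

theorem pathLabel_comp_val_surjective (hk : 4 ≤ k) :
    (pathLabel ∘ Fin.val : Fin k → Fin 4).Surjective := by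
  intro i
  refine ⟨⟨2 * (i.val % 2) + i.val / 2, by omega⟩, Fin.ext ?_⟩
  have := pathLabel_cases (2 * (i.val % 2) + i.val / 2)
  simp only [Function.comp_apply]
  omega

theorem dominates_pathGraph_preimage_pathLabel_iff (hk : 4 ≤ k) (S : Set (Fin 4)) :
    Dominates (pathGraph k) ((pathLabel ∘ Fin.val) ⁻¹' S) ↔
      (∃ i ∈ S, i.val % 2 = 0) ∧ (∃ i ∈ S, i.val % 2 = 1) := by
  constructor
  · intro hdom
    constructor
    · by_contra! h
      obtain ⟨u, hu, hadj⟩ := hdom ⟨0, by omega⟩ fun h0 => h _ h0 (by simp [pathLabel])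
      have hu' := h _ hu
      have := pathLabel_cases u
      simp only [pathGraph_adj, Function.comp_apply] at hadj hu'
      omega
    · by_contra! h
      obtain ⟨u, hu, hadj⟩ := hdom ⟨3, by omega⟩ fun h3 => h _ h3 (by simp [pathLabel])
      have hu' := h _ hu
      have := pathLabel_cases u
      simp only [pathGraph_adj, Function.comp_apply] at hadj hu'
      omega
  · rintro ⟨⟨i, hiS, hi⟩, ⟨j, hjS, hj⟩⟩ v hv
    have hvi : pathLabel v ≠ i := fun h => hv (by rwa [Set.mem_preimage, Function.comp_apply, h])
    have hvj : pathLabel v ≠ j := fun h => hv (by rwa [Set.mem_preimage, Function.comp_apply, h])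
    obtain ⟨u, hu, hadj, hlabel⟩ : ∃ u : ℕ, ∃ hu : u < k,
        (u + 1 = v.val ∨ v.val + 1 = u) ∧ (pathLabel u = i ∨ pathLabel u = j) := by
      rw [Ne, Fin.ext_iff] at hvi hvj
      simp only [Fin.ext_iff]
      have := pathLabel_cases v
      rcases (by omega : v.val ≤ 1 ∨ v.val = 2 ∨ 3 ≤ v.val) with h | h | h
      · have := pathLabel_cases (1 - v.val)
        exact ⟨1 - v.val, by omega, by omega, by omega⟩
      · have := pathLabel_cases 3
        exact ⟨3, by omega, by omega, by omega⟩
      · have := pathLabel_cases (v.val - 1)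
        exact ⟨v.val - 1, by omega, by omega, by omega⟩
    refine ⟨⟨u, hu⟩, ?_, by simpa [pathGraph_adj] using hadj⟩
    rcases hlabel with h | h
    · simpa [h] using hiS
    · simpa [h] using hjS

theorem cycleGraph_four_adj_iff (i j : Fin 4) :
    (cycleGraph 4).Adj i j ↔ i.val % 2 ≠ j.val % 2 := by
  revert i j
  simp only [cycleGraph_adj]
  decide

theorem coalition_pathGraph_preimage_pathLabel_iff (hk : 4 ≤ k) (i j : Fin 4) :
    Coalition (pathGraph k) ((pathLabel ∘ Fin.val) ⁻¹' {i}) ((pathLabel ∘ Fin.val) ⁻¹' {j}) ↔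
      (cycleGraph 4).Adj i j := by
  simp only [Coalition, ← Set.preimage_union, dominates_pathGraph_preimage_pathLabel_iff hk,
    Set.disjoint_preimage_iff (pathLabel_comp_val_surjective hk), Set.disjoint_singleton,
    Set.mem_union, Set.mem_singleton_iff, exists_eq_or_imp, exists_eq_left, cycleGraph_four_adj_iff,
    ne_eq]
  omega

end Path

theorem stmt12 (k : ℕ) (hk : 4 ≤ k) :
    ∃ P : Finset (Set (Fin k)),
      IsCoalitionPartition (SimpleGraph.pathGraph k) P ∧ P.card = 4 ∧
      Nonempty ((coalitionGraph (SimpleGraph.pathGraph k) P) ≃g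
        SimpleGraph.cycleGraph 4) := by
  have hsurj := pathLabel_comp_val_surjective hk
  have hcoal := coalition_pathGraph_preimage_pathLabel_iff hk
  refine ⟨_, isCoalitionPartition_image_preimage_singleton hsurj fun i => ⟨i + 1, ?_⟩,
    card_image_preimage_singleton hsurj,
    nonempty_coalitionGraph_image_preimage_singleton_iso hsurj hcoal⟩
  rw [hcoal, cycleGraph_four_adj_iff]
  revert i
  decide
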